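/- A univariate polynomial f ∈ ℝ[t] is non-negative on all of ℝ if and only if both f(t) and f(−t) are non-negative on ℝ₊. Consequently, if f has at most 2k+1 monomials and is non-negative on ℝ, then both f(t) and f(−t) admit decompositions as sums Σ_i t^i σ_i with σ_i sums of squares of degree at most 2k. -/

import Mathlib

/-!
Descartes' rule of signs drives an induction on `k`, where `2k` bounds the number of sign
changes in the coefficient sequence (a polynomial with `2k + 1` monomials has at most `2k`).
Let `f ≥ 0` on `ℝ₊`; after splitting off a power of `t` we may assume `f(0) > 0`. If some
coefficient, at `t ^ j`, is negative, subtract the largest `c t ^ j` keeping `f` nonnegative on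
`ℝ₊`: the result vanishes at some `t₀ > 0`, to even order, so it is `(t - t₀)² h`. Its coefficient
at `t ^ j` is still negative, so it has as many sign changes as `f`, while each factor `t - t₀`
adds one: `h` has two fewer, and `f = (t - t₀)² h + c t ^ j` by induction. Over `ℝ`, apply this
to `f(t)` and `f(-t)`, which have the same support.
-/

open Polynomial

/-- `g` admits a sparse decomposition `g = Σ_i t^i σ_i` with each `σ_i` a sum of squares
of polynomials of degree at most `k` (hence `deg σ_i ≤ 2k`). -/
def HasSparseSOSDecomp (k : ℕ) (g : Polynomial ℝ) : Prop :=
  ∃ (numSummands : ℕ) (σ : ℕ → Polynomial ℝ),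
    (∀ i, ∃ (l : ℕ) (h : Fin l → Polynomial ℝ),
      (∀ j, (h j).natDegree ≤ k) ∧ σ i = ∑ j, h j ^ 2) ∧
    g = ∑ i ∈ Finset.range numSummands, X ^ i * σ i

open Finset Filter Topology Real Set

theorem exists_forall_le_of_tendsto_nhdsGT_zero_of_tendsto_atTop {f : ℝ → ℝ}
    (hf : ContinuousOn f (Ioi 0)) (h0 : Tendsto f (𝓝[>] 0) atTop)
    (htop : Tendsto f atTop atTop) : ∃ t₀ > 0, ∀ t > 0, f t₀ ≤ f t := by
  -- `exp` turns both ends of `(0, ∞)` into the cocompact filter of `ℝ`.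
  have hcont : Continuous (f ∘ exp) := hf.comp_continuous continuous_exp exp_pos
  have hlim : Tendsto (f ∘ exp) (cocompact ℝ) atTop := by
    rw [cocompact_eq_atBot_atTop, tendsto_sup]
    exact ⟨h0.comp tendsto_exp_atBot_nhdsGT, htop.comp tendsto_exp_atTop⟩
  obtain ⟨s, hs⟩ := hcont.exists_forall_le hlim
  exact ⟨exp s, exp_pos s, fun t ht => by simpa [exp_log ht] using hs (log t)⟩

namespace Polynomial

section SignVariations

variable {R : Type*} [Semiring R] [LinearOrder R]

theorem signVariations_lt_card_support {P : R[X]} (hP : P ≠ 0) :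
    P.signVariations < #P.support := by
  by_cases he : P.eraseLead = 0
  · have hlc : SignType.sign P.leadingCoeff ≠ 0 := by simpa using hP
    rw [signVariations_eq_eraseLead_add_ite hP, he]
    simp [hlc, card_pos.2 (support_nonempty.2 hP)]
  · have := signVariations_lt_card_support he
    have := card_support_eraseLead_add_one hP
    have := signVariations_le_eraseLead_succ P
    omega
termination_by #P.support
decreasing_by exact eraseLead_support_card_lt hP

theorem coeff_nonneg_of_signVariations_eq_zero {P : R[X]} (hlc : 0 ≤ P.leadingCoeff)
    (hP : P.signVariations = 0) (i : ℕ) : 0 ≤ P.coeff i := by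
  by_cases h0 : P = 0
  · simp [h0]
  have hsplit := signVariations_eq_eraseLead_add_ite h0
  rw [hP] at hsplit
  have hlc' : 0 < P.leadingCoeff := hlc.lt_of_ne' (leadingCoeff_ne_zero.2 h0)
  have hlcE : 0 ≤ P.eraseLead.leadingCoeff := by
    by_contra! hneg
    simp [hlc', hneg] at hsplit
  by_cases hi : i = P.natDegree
  · exact hi ▸ hlc
  · rw [← eraseLead_coeff_of_ne i hi]
    exact coeff_nonneg_of_signVariations_eq_zero hlcE (by omega) i
termination_by #P.support
decreasing_by exact eraseLead_support_card_lt h0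

theorem signVariations_congr {P Q : R[X]}
    (h : ∀ i, SignType.sign (P.coeff i) = SignType.sign (Q.coeff i)) :
    P.signVariations = Q.signVariations := by
  have hsupp : P.support = Q.support := by
    ext i
    rw [mem_support_iff, mem_support_iff, ← sign_ne_zero, h, sign_ne_zero]
  have hsigns : P.coeffList.map SignType.sign = Q.coeffList.map SignType.sign := by
    simp only [coeffList, degree, hsupp, List.map_map]
    exact List.map_congr_left fun i _ => h i
  simp only [signVariations, hsigns]

theorem signVariations_X_mul (P : R[X]) : (X * P).signVariations = P.signVariations := by
  by_cases hP : P = 0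
  · simp [hP]
  have hcoeffs : (X * P).coeffList = P.coeffList ++ [0] := by
    have : Nontrivial R := nontrivial_iff.1 (nontrivial_of_ne P 0 hP)
    rw [coeffList, coeffList, withBotSucc_degree_eq_natDegree_add_one hP,
      withBotSucc_degree_eq_natDegree_add_one (monic_X.mul_right_ne_zero hP), natDegree_X_mul hP]
    simp [List.range_succ_eq_map (n := P.natDegree + 1), Function.comp_def, coeff_X_mul]
  simp [signVariations, hcoeffs]

theorem signVariations_X_pow_mul (n : ℕ) (P : R[X]) :
    (X ^ n * P).signVariations = P.signVariations := by
  induction n with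
  | zero => simp
  | succ n ih => rw [pow_succ', mul_assoc, signVariations_X_mul, ih]

end SignVariations

theorem signVariations_add_two_le_sq_mul {R : Type*} [CommRing R] [LinearOrder R]
    [IsStrictOrderedRing R] {P : R[X]} {η : R} (hη : 0 < η) (hP : P ≠ 0) :
    P.signVariations + 2 ≤ ((X - C η) ^ 2 * P).signVariations := by
  have h₁ := succ_signVariations_le_X_sub_C_mul hη hP
  have h₂ := succ_signVariations_le_X_sub_C_mul hη (mul_ne_zero (X_sub_C_ne_zero η) hP)
  rw [← mul_assoc, ← sq] at h₂
  omega

section SparseSOSCone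

variable (R : Type*) [CommSemiring R] in
noncomputable def sparseSOSCone (k : ℕ) : AddSubmonoid R[X] :=
  AddSubmonoid.closure {p | ∃ (i : ℕ) (h : R[X]), h.natDegree ≤ k ∧ p = X ^ i * h ^ 2}

variable {R : Type*} [CommSemiring R]

theorem mul_mem_sparseSOSCone {k k' : ℕ} {m g : R[X]}
    (hm : ∀ (i : ℕ) (h : R[X]), h.natDegree ≤ k → m * (X ^ i * h ^ 2) ∈ sparseSOSCone R k')
    (hg : g ∈ sparseSOSCone R k) : m * g ∈ sparseSOSCone R k' := by
  induction hg using AddSubmonoid.closure_induction with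
  | mem p hp =>
    obtain ⟨i, h, hh, rfl⟩ := hp
    exact hm i h hh
  | zero => simp
  | add p q _ _ hp hq => simpa only [mul_add] using add_mem hp hq

theorem X_pow_mul_mem_sparseSOSCone {k : ℕ} {g : R[X]} (n : ℕ) (hg : g ∈ sparseSOSCone R k) :
    X ^ n * g ∈ sparseSOSCone R k :=
  mul_mem_sparseSOSCone (fun i h hh => AddSubmonoid.subset_closure
    ⟨n + i, h, hh, by ring⟩) hg

theorem sq_mul_mem_sparseSOSCone {k : ℕ} {s g : R[X]} (hs : s.natDegree ≤ 1)
    (hg : g ∈ sparseSOSCone R k) : s ^ 2 * g ∈ sparseSOSCone R (k + 1) :=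
  mul_mem_sparseSOSCone (fun i h hh => AddSubmonoid.subset_closure
    ⟨i, s * h, natDegree_mul_le.trans (by omega), by ring⟩) hg

theorem C_mul_X_pow_mem_sparseSOSCone (k j : ℕ) {c : ℝ} (hc : 0 ≤ c) :
    C c * X ^ j ∈ sparseSOSCone ℝ k :=
  AddSubmonoid.subset_closure
    ⟨j, C √c, by simp, by rw [← C_pow, Real.sq_sqrt hc, mul_comm]⟩

theorem mem_sparseSOSCone_of_coeff_nonneg (k : ℕ) {g : ℝ[X]} (hg : ∀ i, 0 ≤ g.coeff i) :
    g ∈ sparseSOSCone ℝ k := by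
  rw [g.as_sum_range_C_mul_X_pow]
  exact sum_mem fun i _ => C_mul_X_pow_mem_sparseSOSCone k i (hg i)

/-- Grouping the generators `X ^ e m * h m ^ 2` by the exponent `e m` yields the `σ_i`. -/
theorem hasSparseSOSDecomp_of_mem_sparseSOSCone {k : ℕ} {g : ℝ[X]}
    (hg : g ∈ sparseSOSCone ℝ k) : HasSparseSOSDecomp k g := by
  obtain ⟨l, hl, rfl⟩ := AddSubmonoid.exists_list_of_mem_closure hg
  choose e h hdeg heq using fun m : Fin l.length => hl _ (List.getElem_mem m.2)
  refine ⟨univ.sup e + 1, fun i => ∑ m, (if e m = i then h m else 0) ^ 2,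
    fun i => ⟨l.length, _, fun m => ?_, rfl⟩, ?_⟩
  · split_ifs
    exacts [hdeg m, by simp]
  · simp_rw [mul_sum, ← Fin.sum_univ_getElem l]
    rw [sum_comm]
    refine sum_congr rfl fun m _ => ?_
    simp [heq m, ite_pow, mul_ite, Nat.lt_succ_of_le (le_sup (mem_univ m))]

end SparseSOSCone

def Copositive (f : ℝ[X]) : Prop := ∀ x : ℝ, 0 ≤ x → 0 ≤ f.eval x

namespace Copositive

variable {f g m : ℝ[X]}

theorem leadingCoeff_nonneg (hf : Copositive f) : 0 ≤ f.leadingCoeff := by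
  by_contra! hlc
  rcases eq_or_ne f.natDegree 0 with hdeg | hdeg
  · have := hf 0 le_rfl
    rw [leadingCoeff, hdeg, coeff_zero_eq_eval_zero] at hlc
    linarith
  · have hto := tendsto_atBot_of_leadingCoeff_nonpos f
      (natDegree_pos_iff_degree_pos.1 (Nat.pos_of_ne_zero hdeg)) hlc.le
    obtain ⟨t, hneg, ht⟩ :=
      ((hto.eventually (eventually_lt_atBot 0)).and (eventually_ge_atTop 0)).exists
    exact (hf t ht).not_gt hneg

theorem of_mul (hm : m ≠ 0) (hm₀ : Copositive m) (hmg : Copositive (m * g)) :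
    Copositive g := by
  intro t ht
  by_contra! hneg
  obtain ⟨ε, hε, hball⟩ := Metric.eventually_nhds_iff.1
    (g.continuous.continuousAt.eventually (gt_mem_nhds hneg))
  obtain ⟨s, ⟨hts, hsε⟩, hs⟩ : ((Ioo t (t + ε)) \ m.rootSet ℝ).Nonempty :=
    ((Ioo_infinite (by linarith)).sdiff (m.rootSet_finite ℝ)).nonempty
  have hms : 0 < m.eval s := (hm₀ s (by linarith)).lt_of_ne' fun h => hs (by
    simp [mem_rootSet, hm, h])
  have hgs : g.eval s < 0 := hball (by rw [Real.dist_eq, abs_lt]; constructor <;> linarith)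
  have := hmg s (by linarith)
  rw [eval_mul] at this
  nlinarith

theorem sq_X_sub_C_dvd (hf : Copositive f) {t : ℝ} (ht : 0 < t) (hroot : f.eval t = 0) :
    (X - C t) ^ 2 ∣ f := by
  rcases eq_or_ne f 0 with rfl | hf0
  · exact dvd_zero _
  have hmin : IsLocalMin (fun x => f.eval x) t :=
    Filter.mem_of_superset (Ioi_mem_nhds ht) fun x hx => by
      simpa [hroot] using hf x (le_of_lt hx)
  have hderiv : f.derivative.eval t = 0 := by simpa using hmin.deriv_eq_zero
  rw [← le_rootMultiplicity_iff hf0]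
  exact (one_lt_rootMultiplicity_iff_isRoot hf0).2 ⟨hroot, hderiv⟩

end Copositive

theorem exists_eq_X_pow_mul_and_eval_zero_ne_zero {f : ℝ[X]} (hf : f ≠ 0) :
    ∃ (n : ℕ) (g : ℝ[X]), f = X ^ n * g ∧ g.eval 0 ≠ 0 := by
  obtain ⟨g, hfg, hdvd⟩ := exists_eq_pow_rootMultiplicity_mul_and_not_dvd f hf 0
  rw [C_0, sub_zero] at hfg hdvd
  exact ⟨_, g, hfg, fun h => hdvd (X_dvd_iff.2 (by rwa [coeff_zero_eq_eval_zero]))⟩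

theorem exists_forall_eval_div_pow_le {g : ℝ[X]} (hg₀ : 0 < g.eval 0) (hlc : 0 < g.leadingCoeff)
    {j : ℕ} (hj₀ : 0 < j) (hjd : j < g.natDegree) :
    ∃ t₀ > 0, ∀ t > 0, g.eval t₀ / t₀ ^ j ≤ g.eval t / t ^ j := by
  refine exists_forall_le_of_tendsto_nhdsGT_zero_of_tendsto_atTop
    (g.continuous.continuousOn.div (by fun_prop) fun t ht => pow_ne_zero j (ne_of_gt ht)) ?_ ?_
  · have hpow : Tendsto (fun t : ℝ => t ^ j) (𝓝[>] 0) (𝓝[>] 0) :=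
      tendsto_nhdsWithin_iff.2 ⟨((continuous_pow j).tendsto' 0 0 (zero_pow hj₀.ne')).mono_left
        nhdsWithin_le_nhds, eventually_mem_nhdsWithin.mono fun t (ht : 0 < t) => pow_pos ht j⟩
    simpa only [div_eq_mul_inv, Function.comp_def] using
      (g.continuous.tendsto 0 |>.mono_left nhdsWithin_le_nhds
        |>.pos_mul_atTop hg₀ (tendsto_inv_nhdsGT_zero.comp hpow))
  · have := div_tendsto_atTop_of_degree_gt' g (X ^ j)
      (by rw [degree_X_pow, degree_eq_natDegree (leadingCoeff_ne_zero.1 hlc.ne')]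
          exact_mod_cast hjd)
      (by simpa using hlc)
    simpa using this

/-- Take `c = min_{t > 0} g(t) / t ^ j`. -/
theorem Copositive.exists_sub_C_mul_X_pow_eval_eq_zero {g : ℝ[X]} (hg : Copositive g)
    (hg₀ : 0 < g.eval 0) {j : ℕ} (hj₀ : 0 < j) (hjd : j < g.natDegree) :
    ∃ t₀ > 0, ∃ c ≥ 0, Copositive (g - C c * X ^ j) ∧ (g - C c * X ^ j).eval t₀ = 0 := by
  have hlc : 0 < g.leadingCoeff := hg.leadingCoeff_nonneg.lt_of_ne' (leadingCoeff_ne_zero.2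
    (by rintro rfl; simp at hjd))
  obtain ⟨t₀, ht₀, hmin⟩ := exists_forall_eval_div_pow_le hg₀ hlc hj₀ hjd
  refine ⟨t₀, ht₀, g.eval t₀ / t₀ ^ j, div_nonneg (hg t₀ ht₀.le) (by positivity), ?_, ?_⟩
  · intro t ht
    rcases ht.eq_or_lt with rfl | ht
    · simpa [zero_pow hj₀.ne'] using hg₀.le
    · have := hmin t ht
      rw [le_div_iff₀ (by positivity)] at this
      simpa using this
  · simp [div_mul_cancel₀ _ (pow_ne_zero j ht₀.ne')]

theorem Copositive.exists_eq_sq_mul_add_C_mul_X_pow {g : ℝ[X]} (hg : Copositive g)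
    (hg₀ : 0 < g.eval 0) {j : ℕ} (hj : g.coeff j < 0) :
    ∃ t₀ > 0, ∃ c ≥ 0, ∃ h : ℝ[X], g = (X - C t₀) ^ 2 * h + C c * X ^ j ∧ Copositive h ∧
      h.signVariations + 2 ≤ g.signVariations := by
  have hj₀ : 0 < j := Nat.pos_of_ne_zero <| by
    rintro rfl
    rw [coeff_zero_eq_eval_zero] at hj
    linarith
  have hjd : j < g.natDegree := (le_natDegree_of_ne_zero hj.ne).lt_of_ne <| by
    rintro rfl
    exact hj.not_ge hg.leadingCoeff_nonneg
  obtain ⟨t₀, ht₀, c, hc, hq, hroot⟩ := hg.exists_sub_C_mul_X_pow_eval_eq_zero hg₀ hj₀ hjd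
  obtain ⟨h, hh⟩ := hq.sq_X_sub_C_dvd ht₀ hroot
  have hsign : (g - C c * X ^ j).signVariations = g.signVariations := by
    refine signVariations_congr fun i => ?_
    rcases eq_or_ne i j with rfl | hij
    · rw [coeff_sub, coeff_C_mul_X_pow, if_pos rfl, sign_neg hj, sign_neg (by linarith)]
    · simp [hij]
  have hh₀ : h ≠ 0 := by
    rintro rfl
    have := congrArg (coeff · j) hh
    simp only [coeff_sub, coeff_C_mul_X_pow, if_true, mul_zero, coeff_zero] at this
    linarith
  have hsq : Copositive ((X - C t₀) ^ 2) := fun x _ => by simpa using sq_nonneg (x - t₀)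
  refine ⟨t₀, ht₀, c, hc, h, by rw [← hh]; ring,
    hsq.of_mul (pow_ne_zero 2 (X_sub_C_ne_zero t₀)) (hh ▸ hq), ?_⟩
  rw [← hsign, hh]
  exact signVariations_add_two_le_sq_mul ht₀ hh₀

theorem mem_sparseSOSCone_of_copositive (k : ℕ) {f : ℝ[X]} (hf : Copositive f)
    (hV : f.signVariations ≤ 2 * k) : f ∈ sparseSOSCone ℝ k := by
  induction k generalizing f with
  | zero =>
    exact mem_sparseSOSCone_of_coeff_nonneg 0
      (coeff_nonneg_of_signVariations_eq_zero hf.leadingCoeff_nonneg (by omega))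
  | succ k ih =>
    rcases eq_or_ne f 0 with rfl | hf₀
    · exact zero_mem _
    obtain ⟨n, g, rfl, hg₀⟩ := exists_eq_X_pow_mul_and_eval_zero_ne_zero hf₀
    have hXn : Copositive (X ^ n) := fun x hx => by simpa using pow_nonneg hx n
    have hg := hXn.of_mul (pow_ne_zero n X_ne_zero) hf
    rw [signVariations_X_pow_mul] at hV
    refine X_pow_mul_mem_sparseSOSCone n ?_
    by_cases hcoeff : ∀ i, 0 ≤ g.coeff i
    · exact mem_sparseSOSCone_of_coeff_nonneg _ hcoeff
    obtain ⟨j, hj⟩ := not_forall.1 hcoeff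
    obtain ⟨t₀, -, c, hc, h, rfl, hh, hVh⟩ :=
      hg.exists_eq_sq_mul_add_C_mul_X_pow ((hg 0 le_rfl).lt_of_ne' hg₀) (not_le.1 hj)
    exact add_mem (sq_mul_mem_sparseSOSCone (natDegree_X_sub_C t₀).le (ih hh (by omega)))
      (C_mul_X_pow_mem_sparseSOSCone _ j hc)

theorem hasSparseSOSDecomp_of_copositive {k : ℕ} {f : ℝ[X]} (hcard : #f.support ≤ 2 * k + 1)
    (hf : Copositive f) : HasSparseSOSDecomp k f := by
  refine hasSparseSOSDecomp_of_mem_sparseSOSCone (mem_sparseSOSCone_of_copositive k hf ?_)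
  rcases eq_or_ne f 0 with rfl | hf₀
  · simp
  · have := signVariations_lt_card_support hf₀
    omega

theorem support_comp_neg_X {R : Type*} [CommRing R] (p : R[X]) :
    (p.comp (-X)).support = p.support := by
  ext i
  rw [mem_support_iff, mem_support_iff, ← neg_one_mul (X : R[X]), ← C_1, ← C_neg,
    comp_C_mul_X_coeff]
  exact (isUnit_neg_one.pow i).mul_left_eq_zero.not

end Polynomial

/-- A polynomial is non-negative on `ℝ` iff both `f(t)` and `f(-t)` are non-negative on
`ℝ₊`; consequently, a polynomial with at most `2k+1` monomials that is non-negative on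
`ℝ` is such that both `f(t)` and `f(-t)` admit sparse sos decompositions `Σ_i t^i σ_i`
with `σ_i` sums of squares of degree at most `2k`. -/
theorem stmt_18 (k : ℕ) :
    (∀ f : ℝ[X], (∀ x : ℝ, 0 ≤ f.eval x) ↔
      ((∀ x : ℝ, 0 ≤ x → 0 ≤ f.eval x) ∧
        ∀ x : ℝ, 0 ≤ x → 0 ≤ (f.comp (-X)).eval x)) ∧
    ∀ f : ℝ[X], f.support.card ≤ 2 * k + 1 → (∀ x : ℝ, 0 ≤ f.eval x) →
      HasSparseSOSDecomp k f ∧ HasSparseSOSDecomp k (f.comp (-X)) := by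
  refine ⟨fun f => ⟨fun hf => ⟨fun x _ => hf x, fun x _ => by simpa using hf (-x)⟩, ?_⟩,
    fun f hcard hf => ⟨hasSparseSOSDecomp_of_copositive hcard fun x _ => hf x,
      hasSparseSOSDecomp_of_copositive (by rwa [support_comp_neg_X])
        fun x _ => by simpa using hf (-x)⟩⟩
  rintro ⟨hpos, hneg⟩ x
  rcases le_total 0 x with hx | hx
  · exact hpos x hx
  · simpa using hneg (-x) (neg_nonneg.2 hx)
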